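/- arXiv:2012.08851 — 9 statements merged into one kernel-verified Lean document; each statement's English description precedes it below -/
import Mathlib

section
/- Let n, p be positive integers with 2p ≤ n. Let Y ∈ ℝ^{n×p} satisfy YᵀY = I_p and let Z ∈ ℝ^{n×p} satisfy ZᵀY = 0. Then there exist an orthonormal family y_1, …, y_{2p} of vectors in ℝⁿ, an orthogonal matrix P ∈ ℝ^{p×p} (PᵀP = I_p), and real numbers θ_1 ≥ θ_2 ≥ … ≥ θ_p ≥ 0 such that YP = [y_1, …, y_p] (the matrix whose columns are y_1, …, y_p) and ZP = [θ_1 y_{p+1}, …, θ_p y_{2p}] (the matrix whose i-th column is θ_i y_{p+i}). -/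
/-!
Diagonalise `Zᴴ Z` by an orthonormal eigenbasis `b` of `𝕜^p`, with eigenvalues in decreasing
order; the columns of `P` are the vectors of `b`. Then the vectors `Y bᵢ` are orthonormal, the
vectors `Z bᵢ` are pairwise orthogonal with decreasing norms `θᵢ = ‖Z bᵢ‖`, and `Zᴴ Y = 0` makes
every `Z bᵢ` orthogonal to every `Y bⱼ`. Normalising the nonzero vectors among these `2p` and
completing them to an orthonormal basis of `𝕜ⁿ`, which has room since `2p ≤ n`, gives the
`yₖ`.
-/

open Matrix Module

section InnerProductSpace

variable {𝕜 E F : Type*} [RCLike 𝕜] [NormedAddCommGroup E] [InnerProductSpace 𝕜 E]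
  [FiniteDimensional 𝕜 E] [NormedAddCommGroup F] [InnerProductSpace 𝕜 F]

theorem exists_orthonormal_smul_eq_of_pairwise_inner_eq_zero {ι : Type*} [Fintype ι]
    {v : ι → E} (hv : Pairwise fun i j => inner 𝕜 (v i) (v j) = 0)
    (hcard : Fintype.card ι ≤ finrank 𝕜 E) :
    ∃ e : ι → E, Orthonormal 𝕜 e ∧ ∀ i, v i = (‖v i‖ : 𝕜) • e i := by
  classical
  let w : ι ⊕ Fin (finrank 𝕜 E - Fintype.card ι) → E :=
    Sum.elim (fun i => (‖v i‖⁻¹ : 𝕜) • v i) 0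
  let s : Set (ι ⊕ Fin (finrank 𝕜 E - Fintype.card ι)) := Sum.inl '' {i | v i ≠ 0}
  have hw : Orthonormal 𝕜 (s.domRestrict w) := by
    refine ⟨?_, ?_⟩
    · rintro ⟨_, i, hi, rfl⟩
      exact norm_smul_inv_norm hi
    · intro ⟨_, i, _, hi⟩ ⟨_, j, _, hj⟩ hne
      subst hi hj
      have hij : i ≠ j := by rintro rfl; exact hne rfl
      simp [w, inner_smul_left, inner_smul_right, hv hij]
  obtain ⟨b, hb⟩ := hw.exists_orthonormalBasis_extension_of_card_eq 
    (by rw [Fintype.card_sum, Fintype.card_fin]; omega)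
  refine ⟨b ∘ Sum.inl, b.orthonormal.comp _ Sum.inl_injective, fun i => ?_⟩
  by_cases hi : v i = 0
  · simp [hi]
  · rw [Function.comp_apply, hb _ ⟨i, hi, rfl⟩]
    simp [w, smul_smul, hi]

theorem LinearMap.exists_orthonormalBasis_pairwise_inner_eq_zero_antitone_norm
    [FiniteDimensional 𝕜 F] (L : E →ₗ[𝕜] F) {n : ℕ} (hn : finrank 𝕜 E = n) :
    ∃ b : OrthonormalBasis (Fin n) 𝕜 E,
      (Pairwise fun i j => inner 𝕜 (L (b i)) (L (b j)) = 0) ∧ Antitone fun i => ‖L (b i)‖ := by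
  have hT := L.isPositive_adjoint_comp_self.isSymmetric
  set b := hT.eigenvectorBasis hn
  have hinner (i j) :
      inner 𝕜 (L (b i)) (L (b j)) = hT.eigenvalues hn j * inner 𝕜 (b i) (b j) := by
    rw [← adjoint_inner_right, ← comp_apply, hT.apply_eigenvectorBasis, inner_smul_right]
  have hnorm (i) : ‖L (b i)‖ ^ 2 = hT.eigenvalues hn i := by
    have := hinner i i
    rw [inner_self_eq_norm_sq_to_K, inner_self_eq_norm_sq_to_K, b.orthonormal.1 i] at this
    exact_mod_cast (by simpa using this : ((‖L (b i)‖ ^ 2 : ℝ) : 𝕜) = hT.eigenvalues hn i)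
  refine ⟨b, fun i j hij => by simp only [hinner, b.orthonormal.2 hij, mul_zero],
    fun i j hij => ?_⟩
  rw [← pow_le_pow_iff_left₀ (norm_nonneg _) (norm_nonneg _) two_ne_zero, hnorm, hnorm]
  exact hT.eigenvalues_antitone hn hij

end InnerProductSpace

namespace Matrix

variable {𝕜 m n : Type*} [RCLike 𝕜] [Fintype n] [DecidableEq n]

theorem inner_toEuclideanLin_toEuclideanLin [Fintype m] [DecidableEq m] (A B : Matrix m n 𝕜)
    (x y : EuclideanSpace 𝕜 n) :
    inner 𝕜 (A.toEuclideanLin x) (B.toEuclideanLin y) =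
      inner 𝕜 x ((Aᴴ * B).toEuclideanLin y) := by
  rw [toLpLin_mul_same, toEuclideanLin_conjTranspose_eq_adjoint, LinearMap.comp_apply,
    LinearMap.adjoint_inner_right]

theorem mul_toMatrix_orthonormalBasis_apply (A : Matrix m n 𝕜)
    (b : OrthonormalBasis n 𝕜 (EuclideanSpace 𝕜 n)) (r : m) (i : n) :
    (A * (EuclideanSpace.basisFun n 𝕜).toBasis.toMatrix b) r i = A.toEuclideanLin (b i) r := by
  simp [mul_apply, mulVec, dotProduct, Basis.toMatrix_apply]

theorem exists_orthonormalBasis_toEuclideanLin_eq_norm_smul_orthonormal [Fintype m]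
    [DecidableEq m] {p : ℕ} (Y Z : Matrix m (Fin p) 𝕜) (hY : Yᴴ * Y = 1) (hZ : Zᴴ * Y = 0)
    (hcard : p + p ≤ Fintype.card m) :
    ∃ (b : OrthonormalBasis (Fin p) 𝕜 (EuclideanSpace 𝕜 (Fin p)))
      (e : Fin p ⊕ Fin p → EuclideanSpace 𝕜 m),
      Orthonormal 𝕜 e ∧ (Antitone fun i => ‖Z.toEuclideanLin (b i)‖) ∧
      (∀ i, Y.toEuclideanLin (b i) = e (.inl i)) ∧
      ∀ i, Z.toEuclideanLin (b i) = (‖Z.toEuclideanLin (b i)‖ : 𝕜) • e (.inr i) := by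
  obtain ⟨b, hbZ, hanti⟩ :=
    Z.toEuclideanLin.exists_orthonormalBasis_pairwise_inner_eq_zero_antitone_norm
      finrank_euclideanSpace_fin
  have hbY : Orthonormal 𝕜 fun i => Y.toEuclideanLin (b i) := by
    rw [orthonormal_iff_ite]
    intro i j
    rw [inner_toEuclideanLin_toEuclideanLin, hY, toLpLin_one, LinearMap.id_apply,
      orthonormal_iff_ite.mp b.orthonormal]
  have hZY (x y) : inner 𝕜 (Z.toEuclideanLin x) (Y.toEuclideanLin y) = 0 := by
    rw [inner_toEuclideanLin_toEuclideanLin, hZ, map_zero, LinearMap.zero_apply,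
      inner_zero_right]
  let v : Fin p ⊕ Fin p → EuclideanSpace 𝕜 m :=
    Sum.elim (fun i => Y.toEuclideanLin (b i)) (fun i => Z.toEuclideanLin (b i))
  have hv : Pairwise fun k l => inner 𝕜 (v k) (v l) = 0 := by
    rintro (i | i) (j | j) hij
    · exact hbY.2 (ne_of_apply_ne Sum.inl hij)
    · exact inner_eq_zero_symm.mp (hZY _ _)
    · exact hZY _ _
    · exact hbZ (ne_of_apply_ne Sum.inr hij)
  obtain ⟨e, he, hve⟩ :=
    exists_orthonormal_smul_eq_of_pairwise_inner_eq_zero hv (by simpa using hcard)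
  refine ⟨b, e, he, hanti, fun i => ?_, fun i => hve (.inr i)⟩
  rw [show Y.toEuclideanLin (b i) = v (.inl i) from rfl, hve,
    show ‖v (.inl i)‖ = 1 from hbY.1 i, RCLike.ofReal_one, one_smul]

end Matrix

/-- Lemma A.1: intrinsic form of a horizontal lift.
Let `n, p` be positive integers with `2p ≤ n`, `Y ∈ ℝ^{n×p}` with `YᵀY = Iₚ`,
`Z ∈ ℝ^{n×p}` with `ZᵀY = 0`. Then there exist an orthonormal family
`y₁, …, y_{2p}` in `ℝⁿ`, an orthogonal matrix `P`, and reals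
`θ₁ ≥ … ≥ θₚ ≥ 0` such that `YP = [y₁, …, yₚ]` and
`ZP = [θ₁ y_{p+1}, …, θₚ y_{2p}]`. -/
theorem horizontal_lift_intrinsic_form
    (n p : ℕ) (h2p : 2 * p ≤ n)
    (Y Z : Matrix (Fin n) (Fin p) ℝ)
    (hY : Yᵀ * Y = 1) (hZ : Zᵀ * Y = 0) :
    ∃ (y : Fin (2 * p) → Fin n → ℝ) (P : Matrix (Fin p) (Fin p) ℝ)
      (θ : Fin p → ℝ),
      (∀ i j : Fin (2 * p), y i ⬝ᵥ y j = if i = j then (1 : ℝ) else 0) ∧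
      Pᵀ * P = 1 ∧
      (∀ i j : Fin p, i ≤ j → θ j ≤ θ i) ∧
      (∀ i : Fin p, 0 ≤ θ i) ∧
      (∀ (i : Fin p) (r : Fin n),
        (Y * P) r i = y ⟨i.val, by have := i.isLt; omega⟩ r) ∧
      (∀ (i : Fin p) (r : Fin n),
        (Z * P) r i = θ i * y ⟨p + i.val, by have := i.isLt; omega⟩ r) := by
  rw [← conjTranspose_eq_transpose_of_trivial] at hY hZ
  obtain ⟨b, e, he, hanti, hYb, hZb⟩ :=
    exists_orthonormalBasis_toEuclideanLin_eq_norm_smul_orthonormal Y Z hY hZ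
      (by simpa [two_mul] using h2p)
  let idx : Fin (2 * p) ≃ Fin p ⊕ Fin p := (finCongr (two_mul p)).trans finSumFinEquiv.symm
  have hidx_inl (i : Fin p) : idx ⟨i, by omega⟩ = .inl i := finSumFinEquiv_symm_apply_castAdd i
  have hidx_inr (i : Fin p) : idx ⟨p + i, by omega⟩ = .inr i := finSumFinEquiv_symm_apply_natAdd i
  refine ⟨fun k => e (idx k), (EuclideanSpace.basisFun (Fin p) ℝ).toBasis.toMatrix b,
    fun i => ‖Z.toEuclideanLin (b i)‖, fun k l => ?_, ?_, fun i j hij => hanti hij,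
    fun i => norm_nonneg _, fun i r => ?_, fun i r => ?_⟩
  · simpa [EuclideanSpace.inner_eq_star_dotProduct, idx.injective.eq_iff, eq_comm] using
      orthonormal_iff_ite.mp (he.comp idx idx.injective) l k
  · simpa using
      (EuclideanSpace.basisFun (Fin p) ℝ).toMatrix_orthonormalBasis_conjTranspose_mul_self b
  · simp [mul_toMatrix_orthonormalBasis_apply, hYb, hidx_inl]
  · rw [mul_toMatrix_orthonormalBasis_apply, hZb]
    simp [hidx_inr]
end

section
/- Let n ≥ p ≥ 1 and let Y, Z ∈ ℝ^{n×p} satisfy YᵀY = I_p and ZᵀY = 0. Let Z = U Θ Vᵀ be a thin SVD of Z (so U ∈ ℝ^{n×p} with UᵀU = I_p, V ∈ ℝ^{p×p} orthogonal, Θ diagonal with nonnegative entries). Then for every t ∈ ℝ, the matrix Y(t) := Y V cos(tΘ) + U sin(tΘ) satisfies Y(t)ᵀ Y(t) = I_p; that is, Y(t) has orthonormal columns for all t. -/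
open Matrix

/-- geodesic representatives stay in the compact Stiefel manifold.
If `YᵀY = Iₚ`, `ZᵀY = 0` and `Z = UΘVᵀ` is a thin SVD of `Z`, then for every
`t ∈ ℝ` the matrix `Y(t) = Y V cos(tΘ) + U sin(tΘ)` satisfies `Y(t)ᵀY(t) = Iₚ`. -/
theorem geodesic_in_stiefel
    (n p : ℕ) (hp : 0 < p) (hpn : p ≤ n)
    (Y Z U : Matrix (Fin n) (Fin p) ℝ) (V : Matrix (Fin p) (Fin p) ℝ)
    (θ : Fin p → ℝ)
    (hY : Yᵀ * Y = 1) (hZ : Zᵀ * Y = 0)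
    (hU : Uᵀ * U = 1) (hV : Vᵀ * V = 1)
    (hθ : ∀ i, 0 ≤ θ i)
    (hSVD : Z = U * Matrix.diagonal θ * Vᵀ) :
    ∀ t : ℝ,
      (Y * V * Matrix.diagonal (fun i => Real.cos (t * θ i)) +
        U * Matrix.diagonal (fun i => Real.sin (t * θ i)))ᵀ *
      (Y * V * Matrix.diagonal (fun i => Real.cos (t * θ i)) +
        U * Matrix.diagonal (fun i => Real.sin (t * θ i))) = 1 := by
  intro t
  -- From ZᵀY = 0 deduce diagonal θ * (Uᵀ * Y) = 0
  have hZt : V * (Matrix.diagonal θ * (Uᵀ * Y)) = 0 := by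
    have := hZ
    rw [hSVD] at this
    simpa [Matrix.transpose_mul, Matrix.diagonal_transpose, Matrix.mul_assoc] using this
  have hDUY : Matrix.diagonal θ * (Uᵀ * Y) = 0 := by
    have := congrArg (fun M => Vᵀ * M) hZt
    simpa [← Matrix.mul_assoc, hV] using this
  -- entrywise
  have hentry : ∀ i j, θ i * (Uᵀ * Y) i j = 0 := by
    intro i j
    have := congrFun (congrFun hDUY i) j
    simpa [Matrix.diagonal_mul] using this
  -- hence diagonal sin * (Uᵀ * Y) = 0
  have hSin : Matrix.diagonal (fun i => Real.sin (t * θ i)) * (Uᵀ * Y) = 0 := by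
    ext i j
    have h := hentry i j
    rcases mul_eq_zero.mp h with h0 | h0
    · simp [Matrix.diagonal_mul, h0]
    · simp [Matrix.diagonal_mul, h0]
  have hSinT : Yᵀ * U * Matrix.diagonal (fun i => Real.sin (t * θ i)) = 0 := by
    have := congrArg Matrix.transpose hSin
    simpa [Matrix.transpose_mul, Matrix.diagonal_transpose, Matrix.mul_assoc] using this
  set C := Matrix.diagonal (fun i => Real.cos (t * θ i)) with hC
  set S := Matrix.diagonal (fun i => Real.sin (t * θ i)) with hS
  have hCt : Cᵀ = C := by rw [hC, Matrix.diagonal_transpose]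
  have hSt : Sᵀ = S := by rw [hS, Matrix.diagonal_transpose]
  have hYVY : (Y * V * C)ᵀ * (Y * V * C) = C * C := by
    calc (Y * V * C)ᵀ * (Y * V * C)
        = C * (Vᵀ * ((Yᵀ * Y) * V)) * C := by
          simp [Matrix.transpose_mul, hCt, hSt, Matrix.mul_assoc]
      _ = C * C := by rw [hY]; simp [hV, ← Matrix.mul_assoc]
  have hcross1 : (Y * V * C)ᵀ * (U * S) = 0 := by
    calc (Y * V * C)ᵀ * (U * S)
        = C * Vᵀ * (Yᵀ * U * S) := by
          simp [Matrix.transpose_mul, hCt, hSt, Matrix.mul_assoc]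
      _ = 0 := by rw [hSinT, Matrix.mul_zero]
  have hcross2 : (U * S)ᵀ * (Y * V * C) = 0 := by
    calc (U * S)ᵀ * (Y * V * C)
        = S * (Uᵀ * Y) * (V * C) := by
          simp [Matrix.transpose_mul, hCt, hSt, Matrix.mul_assoc]
      _ = 0 := by rw [hSin, Matrix.zero_mul]
  have hUU : (U * S)ᵀ * (U * S) = S * S := by
    calc (U * S)ᵀ * (U * S)
        = S * ((Uᵀ * U) * S) := by
          simp [Matrix.transpose_mul, hCt, hSt, Matrix.mul_assoc]
      _ = S * S := by rw [hU, Matrix.one_mul]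
  have expand : (Y * V * C + U * S)ᵀ * (Y * V * C + U * S)
      = (Y * V * C)ᵀ * (Y * V * C) + (Y * V * C)ᵀ * (U * S)
        + ((U * S)ᵀ * (Y * V * C) + (U * S)ᵀ * (U * S)) := by
    rw [Matrix.transpose_add, Matrix.add_mul, Matrix.mul_add, Matrix.mul_add]
  rw [expand, hYVY, hcross1, hcross2, hUU]
  rw [hC, hS, Matrix.diagonal_mul_diagonal, Matrix.diagonal_mul_diagonal]
  ext i j
  by_cases hij : i = j
  · subst hij
    simp [Matrix.diagonal, Matrix.one_apply, ← Real.sin_sq_add_cos_sq (t * θ i), sq,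
      add_comm]
  · simp [Matrix.diagonal, Matrix.one_apply, hij]
end

section
/- Let n ≥ p ≥ 1 and let Y, Y' ∈ ℝ^{n×p} both have orthonormal columns, with YᵀY' invertible. Let Y'(YᵀY')^{-1} − Y = U Σ Vᵀ be a thin SVD (U ∈ ℝ^{n×p}, UᵀU = I_p, V ∈ ℝ^{p×p} orthogonal, Σ diagonal with nonnegative entries). Then the matrix Ỹ := Y V cos(arctan Σ) + U sin(arctan Σ) has orthonormal columns and has the same column space as Y'; in particular there exists an orthogonal matrix P ∈ ℝ^{p×p} with Ỹ = Y'P. -/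
open Matrix

/-- matrix form of `Exp_ω ∘ Log_ω = id` on `U_ω`.
Let `Y, Y' ∈ ℝ^{n×p}` have orthonormal columns with `YᵀY'` invertible, and let
`Y'(YᵀY')⁻¹ − Y = U Σ Vᵀ` be a thin SVD. Then
`Ỹ = Y V cos(arctan Σ) + U sin(arctan Σ)` has orthonormal columns, has the same
column space as `Y'`, and `Ỹ = Y'P` for some orthogonal matrix `P`. -/
theorem exp_log_id_matrix_form
    (n p : ℕ) (hp : 0 < p) (hpn : p ≤ n)
    (Y Y' U : Matrix (Fin n) (Fin p) ℝ) (V : Matrix (Fin p) (Fin p) ℝ)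
    (σ : Fin p → ℝ)
    (hY : Yᵀ * Y = 1) (hY' : Y'ᵀ * Y' = 1) (hinv : IsUnit (Yᵀ * Y'))
    (hU : Uᵀ * U = 1) (hV : Vᵀ * V = 1)
    (hσ : ∀ i, 0 ≤ σ i)
    (hSVD : Y' * (Yᵀ * Y')⁻¹ - Y = U * Matrix.diagonal σ * Vᵀ) :
    (Y * V * Matrix.diagonal (fun i => Real.cos (Real.arctan (σ i))) +
        U * Matrix.diagonal (fun i => Real.sin (Real.arctan (σ i))))ᵀ *
      (Y * V * Matrix.diagonal (fun i => Real.cos (Real.arctan (σ i))) +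
        U * Matrix.diagonal (fun i => Real.sin (Real.arctan (σ i)))) = 1 ∧
    LinearMap.range
        (Y * V * Matrix.diagonal (fun i => Real.cos (Real.arctan (σ i))) +
          U * Matrix.diagonal (fun i => Real.sin (Real.arctan (σ i)))).mulVecLin =
      LinearMap.range Y'.mulVecLin ∧
    ∃ P : Matrix (Fin p) (Fin p) ℝ, Pᵀ * P = 1 ∧
      Y * V * Matrix.diagonal (fun i => Real.cos (Real.arctan (σ i))) +
        U * Matrix.diagonal (fun i => Real.sin (Real.arctan (σ i))) = Y' * P := by
  set c : Fin p → ℝ := fun i => Real.cos (Real.arctan (σ i)) with hc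
  set s : Fin p → ℝ := fun i => Real.sin (Real.arctan (σ i)) with hs
  set C : Matrix (Fin p) (Fin p) ℝ := Matrix.diagonal c with hC
  set S : Matrix (Fin p) (Fin p) ℝ := Matrix.diagonal s with hSdef
  set M : Matrix (Fin p) (Fin p) ℝ := Yᵀ * Y' with hM
  have hMdet : IsUnit M.det := (Matrix.isUnit_iff_isUnit_det M).mp hinv
  have hMinv : M * M⁻¹ = 1 := Matrix.mul_nonsing_inv M hMdet
  -- sin = σ * cos pointwise
  have harr : s = fun i => σ i * c i := by
    funext i
    simp only [hs, hc, Real.sin_arctan, Real.cos_arctan]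
    rw [mul_one_div]
  have hsc : S = Matrix.diagonal σ * C := by
    rw [hSdef, hC, Matrix.diagonal_mul_diagonal, harr]
  -- Yᵀ (Y' M⁻¹ - Y) = 0
  have h1 : Yᵀ * (U * Matrix.diagonal σ * Vᵀ) = 0 := by
    rw [← hSVD, Matrix.mul_sub, hY, ← Matrix.mul_assoc, ← hM, hMinv, sub_self]
  have h2 : Yᵀ * U * Matrix.diagonal σ = 0 := by
    have h := congrArg (· * V) h1
    simp only [Matrix.zero_mul] at h
    calc Yᵀ * U * Matrix.diagonal σ
        = Yᵀ * (U * Matrix.diagonal σ * Vᵀ) * V := by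
          simp [Matrix.mul_assoc, hV]
      _ = 0 := h
  -- helper rewriting lemmas
  have hYc : ∀ Z : Matrix (Fin p) (Fin p) ℝ, Yᵀ * (Y * Z) = Z := fun Z => by
    rw [← Matrix.mul_assoc, hY, Matrix.one_mul]
  have hUc : ∀ Z : Matrix (Fin p) (Fin p) ℝ, Uᵀ * (U * Z) = Z := fun Z => by
    rw [← Matrix.mul_assoc, hU, Matrix.one_mul]
  have hVc : ∀ Z : Matrix (Fin p) (Fin p) ℝ, Vᵀ * (V * Z) = Z := fun Z => by
    rw [← Matrix.mul_assoc, hV, Matrix.one_mul]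
  have hcross : Yᵀ * (U * S) = 0 := by
    rw [hsc, ← Matrix.mul_assoc, ← Matrix.mul_assoc, h2, Matrix.zero_mul]
  have hcross2 : S * (Uᵀ * Y) = 0 := by
    have := congrArg Matrix.transpose hcross
    simpa [Matrix.transpose_mul, hSdef, Matrix.mul_assoc] using this
  have hSUY : S * (Uᵀ * (Y * (V * C))) = 0 := by
    calc S * (Uᵀ * (Y * (V * C))) = S * (Uᵀ * Y) * (V * C) := by
          simp [Matrix.mul_assoc]
      _ = 0 := by rw [hcross2, Matrix.zero_mul]
  -- orthonormality of Ỹ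
  have hortho : (Y * V * C + U * S)ᵀ * (Y * V * C + U * S) = 1 := by
    have expand : (Y * V * C + U * S)ᵀ * (Y * V * C + U * S)
        = C * (Vᵀ * (Yᵀ * (Y * (V * C)))) + S * (Uᵀ * (Y * (V * C)))
          + (C * (Vᵀ * (Yᵀ * (U * S))) + S * (Uᵀ * (U * S))) := by
      simp [Matrix.transpose_add, Matrix.transpose_mul, hC, hSdef,
        Matrix.diagonal_transpose, Matrix.add_mul, Matrix.mul_add, Matrix.mul_assoc]
    rw [expand]
    simp only [hYc, hVc, hUc, hcross, hSUY, Matrix.mul_zero, add_zero, zero_add]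
    have hfun : (fun i => c i * c i + s i * s i) = (1 : Fin p → ℝ) := by
      funext i
      simp only [Pi.one_apply, hc, hs]
      have := Real.sin_sq_add_cos_sq (Real.arctan (σ i))
      nlinarith
    rw [hC, hSdef, Matrix.diagonal_mul_diagonal, Matrix.diagonal_mul_diagonal,
      Matrix.diagonal_add, hfun]
    exact Matrix.diagonal_one
  -- Ỹ = Y' P
  have hUSval : U * S = (Y' * M⁻¹ - Y) * (V * C) := by
    rw [hSVD, hsc]
    simp [Matrix.mul_assoc, hVc]
  have hfact : Y * V * C + U * S = Y' * (M⁻¹ * (V * C)) := by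
    rw [hUSval, Matrix.sub_mul]
    simp [Matrix.mul_assoc]
  set P : Matrix (Fin p) (Fin p) ℝ := M⁻¹ * (V * C) with hP
  have hkey : (Y' * P)ᵀ * (Y' * P) = Pᵀ * P := by
    rw [Matrix.transpose_mul, Matrix.mul_assoc, ← Matrix.mul_assoc Y'ᵀ Y' P, hY',
      Matrix.one_mul]
  have hPortho : Pᵀ * P = 1 := by
    rw [← hkey, ← hfact]; exact hortho
  refine ⟨hortho, ?_, P, hPortho, hfact⟩
  -- range equality
  rw [hfact, Matrix.mulVecLin_mul, LinearMap.range_comp]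
  have hsurj : LinearMap.range P.mulVecLin = ⊤ := by
    rw [LinearMap.range_eq_top]
    intro y
    refine ⟨Pᵀ.mulVec y, ?_⟩
    have hPPt : P * Pᵀ = 1 := mul_eq_one_comm.mp hPortho
    simp [Matrix.mulVecLin_apply, Matrix.mulVec_mulVec, hPPt]
  rw [hsurj, Submodule.map_top]
end

section
/- Let n ≥ p ≥ 1 and let Y, Z ∈ ℝ^{n×p} satisfy YᵀY = I_p and ZᵀY = 0. Let Z = U Θ Vᵀ be a thin SVD of Z and assume every diagonal entry θ_i of Θ satisfies 0 ≤ θ_i < π/2. Set Ỹ := Y V cos(Θ) + U sin(Θ). Then YᵀỸ = V cos(Θ), this matrix is invertible, and Ỹ (YᵀỸ)^{-1} − Y = U tan(Θ) Vᵀ. -/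
open Matrix

/-- matrix form of `Log_ω ∘ Exp_ω = id` on `V_ω`.
Let `YᵀY = Iₚ`, `ZᵀY = 0`, and `Z = UΘVᵀ` be a thin SVD with all diagonal
entries `0 ≤ θᵢ < π/2`. Set `Ỹ = Y V cos(Θ) + U sin(Θ)`. Then
`YᵀỸ = V cos(Θ)`, this matrix is invertible, and
`Ỹ(YᵀỸ)⁻¹ − Y = U tan(Θ) Vᵀ`. -/
theorem log_exp_id_matrix_form
    (n p : ℕ) (hp : 0 < p) (hpn : p ≤ n)
    (Y Z U : Matrix (Fin n) (Fin p) ℝ) (V : Matrix (Fin p) (Fin p) ℝ)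
    (θ : Fin p → ℝ)
    (hY : Yᵀ * Y = 1) (hZ : Zᵀ * Y = 0)
    (hU : Uᵀ * U = 1) (hV : Vᵀ * V = 1)
    (hθ0 : ∀ i, 0 ≤ θ i) (hθlt : ∀ i, θ i < Real.pi / 2)
    (hSVD : Z = U * Matrix.diagonal θ * Vᵀ) :
    Yᵀ * (Y * V * Matrix.diagonal (fun i => Real.cos (θ i)) +
        U * Matrix.diagonal (fun i => Real.sin (θ i))) =
      V * Matrix.diagonal (fun i => Real.cos (θ i)) ∧
    IsUnit (V * Matrix.diagonal (fun i => Real.cos (θ i))) ∧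
    (Y * V * Matrix.diagonal (fun i => Real.cos (θ i)) +
        U * Matrix.diagonal (fun i => Real.sin (θ i))) *
      (Yᵀ * (Y * V * Matrix.diagonal (fun i => Real.cos (θ i)) +
        U * Matrix.diagonal (fun i => Real.sin (θ i))))⁻¹ - Y =
      U * Matrix.diagonal (fun i => Real.tan (θ i)) * Vᵀ := by
  have hcos : ∀ i, Real.cos (θ i) ≠ 0 := fun i =>
    ne_of_gt (Real.cos_pos_of_mem_Ioo ⟨lt_of_lt_of_le (neg_neg_of_pos
      (div_pos Real.pi_pos two_pos)) (hθ0 i), hθlt i⟩)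
  -- diag θ * (Uᵀ * Y) = 0
  have hDUY : Matrix.diagonal θ * (Uᵀ * Y) = 0 := by
    have h1 : Vᵀ * Zᵀ * Y = 0 := by
      rw [Matrix.mul_assoc, hZ, Matrix.mul_zero]
    have h2 : Vᵀ * Zᵀ = Matrix.diagonal θ * Uᵀ := by
      rw [hSVD]
      simp only [Matrix.transpose_mul, Matrix.transpose_transpose,
        Matrix.diagonal_transpose, ← Matrix.mul_assoc, hV, Matrix.one_mul]
    rw [h2] at h1
    rw [← Matrix.mul_assoc]
    exact h1
  -- (Yᵀ * U) * diag sin = 0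
  have hsin : (Yᵀ * U) * Matrix.diagonal (fun i => Real.sin (θ i)) = 0 := by
    ext i j
    have hentry : θ j * (Uᵀ * Y) j i = 0 := by
      have := congrFun (congrFun hDUY j) i
      simpa [Matrix.diagonal_mul] using this
    have hYU : (Yᵀ * U) i j = (Uᵀ * Y) j i := by
      simp [Matrix.mul_apply, mul_comm, Matrix.transpose_apply]
    simp only [Matrix.mul_diagonal, Matrix.zero_apply, hYU]
    rcases mul_eq_zero.mp hentry with h | h
    · simp [h]
    · simp [h]
  set C := Matrix.diagonal (fun i => Real.cos (θ i)) with hC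
  set S := Matrix.diagonal (fun i => Real.sin (θ i)) with hS
  have hfirst : Yᵀ * (Y * V * C + U * S) = V * C := by
    rw [Matrix.mul_add, ← Matrix.mul_assoc, ← Matrix.mul_assoc, hY,
      Matrix.one_mul, ← Matrix.mul_assoc, hsin, add_zero]
  have hVVt : V * Vᵀ = 1 := mul_eq_one_comm.mp hV
  have hCinv : C * Matrix.diagonal (fun i => (Real.cos (θ i))⁻¹) = 1 := by
    rw [hC, Matrix.diagonal_mul_diagonal]
    convert Matrix.diagonal_one
    exact mul_inv_cancel₀ (hcos _)
  set N := Matrix.diagonal (fun i => (Real.cos (θ i))⁻¹) * Vᵀ with hN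
  have hright : (V * C) * N = 1 := by
    rw [hN, Matrix.mul_assoc, ← Matrix.mul_assoc C, hCinv, Matrix.one_mul, hVVt]
  have hunit : IsUnit (V * C) := @isUnit_of_invertible _ _ _ (invertibleOfRightInverse _ _ hright)
  have hinv : (V * C)⁻¹ = N := Matrix.inv_eq_right_inv hright
  refine ⟨hfirst, hunit, ?_⟩
  rw [hfirst, hinv, hN, Matrix.add_mul]
  have hStan : S * Matrix.diagonal (fun i => (Real.cos (θ i))⁻¹) =
      Matrix.diagonal (fun i => Real.tan (θ i)) := by
    rw [hS, Matrix.diagonal_mul_diagonal]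
    simp [Real.tan_eq_sin_div_cos, div_eq_mul_inv]
  calc Y * V * C * (Matrix.diagonal (fun i => (Real.cos (θ i))⁻¹) * Vᵀ) +
        U * S * (Matrix.diagonal (fun i => (Real.cos (θ i))⁻¹) * Vᵀ) - Y
      = Y * (V * (C * Matrix.diagonal (fun i => (Real.cos (θ i))⁻¹)) * Vᵀ) +
        U * (S * Matrix.diagonal (fun i => (Real.cos (θ i))⁻¹)) * Vᵀ - Y := by
        simp only [Matrix.mul_assoc]
    _ = U * Matrix.diagonal (fun i => Real.tan (θ i)) * Vᵀ := by
        rw [hCinv, Matrix.mul_one, hVVt, Matrix.mul_one, hStan]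
        abel
end

section
/- Let n ≥ p ≥ 1 and let Y, Y' ∈ ℝ^{n×p} both have orthonormal columns, with YᵀY' invertible. Set W := Y'(YᵀY')^{-1} − Y and let W = U Σ Vᵀ be a thin SVD of W. Then YᵀW = 0, and the matrix Z := U arctan(Σ) Vᵀ satisfies ZᵀY = 0 and every singular value of Z is strictly less than π/2. -/
/-!
`YᵀW = 0` because `Yᵀ Y' (YᵀY')⁻¹ = 1 = YᵀY`. Multiplying `YᵀW = 0` by `V` gives
`YᵀU Σ = 0`, so every column of `YᵀU` with `σⱼ ≠ 0` vanishes, and since `arctan 0 = 0` also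
`YᵀU arctan(Σ) = 0`, i.e. `ZᵀY = 0`.

For the singular values, compare the two expressions of `ZᵀZ`: if `Z = U A Vᵀ = U' M V'ᵀ`
with `A, M` diagonal, then `M² = Q A² Qᵀ` with `Q = V'ᵀV` orthogonal, so each `μᵢ²` is a convex
combination of the `arctan(σⱼ)²`, all of which are `< (π/2)²`.
-/

open Matrix

namespace Matrix

theorem mul_diagonal_comp_eq_zero {m n R : Type*} [Fintype n] [DecidableEq n] [Semiring R]
    [NoZeroDivisors R] {A : Matrix m n R} {d : n → R} (h : A * diagonal d = 0)
    {f : R → R} (hf : f 0 = 0) :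
    A * diagonal (fun j => f (d j)) = 0 := by
  ext i j
  have hij : A i j * d j = 0 := by
    simpa only [mul_diagonal, zero_apply] using congrFun (congrFun h i) j
  rcases mul_eq_zero.mp hij with hA | hd
  · simp [hA]
  · simp [hd, hf]

theorem transpose_svd_mul_eq_zero {m n R : Type*} [Fintype m] [Fintype n] [DecidableEq n]
    [CommSemiring R] [NoZeroDivisors R] {Y U : Matrix m n R} {V : Matrix n n R} {d : n → R}
    (hV : Vᵀ * V = 1) (h : Yᵀ * (U * diagonal d * Vᵀ) = 0) {f : R → R} (hf : f 0 = 0) :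
    (U * diagonal (fun j => f (d j)) * Vᵀ)ᵀ * Y = 0 := by
  have hd : Yᵀ * U * diagonal d = 0 := by
    simpa only [Matrix.mul_assoc, hV, Matrix.mul_one, Matrix.zero_mul]
      using congrArg (· * V) h
  have hfd := congrArg transpose (mul_diagonal_comp_eq_zero hd hf)
  rw [transpose_mul, diagonal_transpose, transpose_mul, transpose_transpose,
    transpose_zero] at hfd
  rw [transpose_mul, transpose_mul, transpose_transpose, diagonal_transpose, Matrix.mul_assoc,
    Matrix.mul_assoc, hfd, Matrix.mul_zero]

theorem svd_transpose_mul_self {m n k R : Type*} [Fintype m] [Fintype n] [DecidableEq n]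
    [CommSemiring R] (U : Matrix m n R) (V : Matrix k n R) (d : n → R) (hU : Uᵀ * U = 1) :
    (U * diagonal d * Vᵀ)ᵀ * (U * diagonal d * Vᵀ) = V * diagonal (fun j => d j ^ 2) * Vᵀ := by
  simp only [transpose_mul, transpose_transpose, diagonal_transpose, Matrix.mul_assoc]
  rw [← Matrix.mul_assoc Uᵀ U, hU, Matrix.one_mul, ← Matrix.mul_assoc (diagonal d),
    diagonal_mul_diagonal]
  simp only [sq]

theorem diagonal_eq_conj_of_conj_eq {n k R : Type*} [Fintype n] [DecidableEq n] [Fintype k]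
    [DecidableEq k] [CommRing R] {V' : Matrix n n R} {V : Matrix n k R} {e : n → R}
    {d : k → R} (hV' : V'ᵀ * V' = 1) (h : V' * diagonal e * V'ᵀ = V * diagonal d * Vᵀ) :
    diagonal e = (V'ᵀ * V) * diagonal d * (V'ᵀ * V)ᵀ := by
  calc diagonal e = V'ᵀ * (V' * diagonal e * V'ᵀ) * V' := by
        rw [Matrix.mul_assoc _ _ V', Matrix.mul_assoc _ V'ᵀ, hV', Matrix.mul_one,
          ← Matrix.mul_assoc, hV', Matrix.one_mul]
    _ = (V'ᵀ * V) * diagonal d * (V'ᵀ * V)ᵀ := by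
        rw [h, transpose_mul, transpose_transpose]
        simp only [Matrix.mul_assoc]

theorem conj_diagonal_apply_self_lt {m n R : Type*} [Fintype m] [DecidableEq m] [Fintype n]
    [DecidableEq n] [Field R] [LinearOrder R] [IsStrictOrderedRing R] {M : Matrix m n R}
    (hM : M * Mᵀ = 1) {d : n → R} {c : R} (hd : ∀ j, d j < c) (i : m) :
    (M * diagonal d * Mᵀ) i i < c := by
  have hrow : ∑ j, M i j ^ 2 = 1 := by
    simpa [mul_apply, sq] using congrFun (congrFun hM i) i
  obtain ⟨j, hj⟩ : ∃ j, M i j ≠ 0 := by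
    by_contra! h0
    simp [h0] at hrow
  have hgap : 0 < ∑ j, M i j ^ 2 * (c - d j) :=
    Finset.sum_pos' (fun j _ => mul_nonneg (sq_nonneg _) (sub_nonneg.mpr (hd j).le))
      ⟨j, Finset.mem_univ j, mul_pos (sq_pos_of_ne_zero hj) (sub_pos.mpr (hd j))⟩
  have hentry : (M * diagonal d * Mᵀ) i i = ∑ j, M i j ^ 2 * d j := by
    rw [mul_apply]
    simp only [mul_diagonal, transpose_apply]
    exact Finset.sum_congr rfl fun j _ => by ring
  simp only [mul_sub, Finset.sum_sub_distrib, ← Finset.sum_mul, hrow, one_mul] at hgap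
  rw [hentry]
  linarith

theorem sq_lt_of_svd_eq {m n R : Type*} [Fintype m] [Fintype n] [DecidableEq n] [Field R]
    [LinearOrder R] [IsStrictOrderedRing R] {U U' : Matrix m n R} {V V' : Matrix n n R}
    {a μ : n → R} (hU : Uᵀ * U = 1) (hV : Vᵀ * V = 1) (hU' : U'ᵀ * U' = 1)
    (hV' : V'ᵀ * V' = 1) (h : U * diagonal a * Vᵀ = U' * diagonal μ * V'ᵀ) {c : R}
    (ha : ∀ j, a j ^ 2 < c) (i : n) :
    μ i ^ 2 < c := by
  have hsq : diagonal (fun j => μ j ^ 2) =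
      (V'ᵀ * V) * diagonal (fun j => a j ^ 2) * (V'ᵀ * V)ᵀ := by
    refine diagonal_eq_conj_of_conj_eq hV' ?_
    rw [← svd_transpose_mul_self U' V' μ hU', ← h, svd_transpose_mul_self U V a hU]
  have hQ : (V'ᵀ * V) * (V'ᵀ * V)ᵀ = 1 := by
    rw [transpose_mul, transpose_transpose, Matrix.mul_assoc, ← Matrix.mul_assoc V,
      mul_eq_one_comm.mp hV, Matrix.one_mul, hV']
  have hdiag := conj_diagonal_apply_self_lt hQ ha i
  rwa [← hsq, diagonal_apply_eq] at hdiag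

end Matrix

theorem log_image_horizontal_and_below_cut_general
    (n p : ℕ)
    (Y Y' U : Matrix (Fin n) (Fin p) ℝ) (V : Matrix (Fin p) (Fin p) ℝ)
    (σ : Fin p → ℝ)
    (hY : Yᵀ * Y = 1) (hinv : IsUnit (Yᵀ * Y'))
    (hU : Uᵀ * U = 1) (hV : Vᵀ * V = 1)
    (hSVD : Y' * (Yᵀ * Y')⁻¹ - Y = U * Matrix.diagonal σ * Vᵀ) :
    Yᵀ * (Y' * (Yᵀ * Y')⁻¹ - Y) = 0 ∧
    (U * Matrix.diagonal (fun i => Real.arctan (σ i)) * Vᵀ)ᵀ * Y = 0 ∧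
    (∀ (U' : Matrix (Fin n) (Fin p) ℝ) (V' : Matrix (Fin p) (Fin p) ℝ)
        (μ : Fin p → ℝ),
      U'ᵀ * U' = 1 → V'ᵀ * V' = 1 → (∀ i, 0 ≤ μ i) →
      U * Matrix.diagonal (fun i => Real.arctan (σ i)) * Vᵀ =
        U' * Matrix.diagonal μ * V'ᵀ →
      ∀ i, μ i < Real.pi / 2) := by
  have horizontal : Yᵀ * (Y' * (Yᵀ * Y')⁻¹ - Y) = 0 := by
    rw [Matrix.mul_sub, ← Matrix.mul_assoc, mul_nonsing_inv _ ((isUnit_iff_isUnit_det _).mp hinv),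
      hY, sub_self]
  refine ⟨horizontal, transpose_svd_mul_eq_zero hV (hSVD ▸ horizontal) Real.arctan_zero, ?_⟩
  intro U' V' μ hU' hV' hμ h i
  have arctan_sq_lt (x : ℝ) : Real.arctan x ^ 2 < (Real.pi / 2) ^ 2 :=
    sq_lt_sq' (Real.neg_pi_div_two_lt_arctan x) (Real.arctan_lt_pi_div_two x)
  exact lt_of_pow_lt_pow_left₀ 2 (by positivity)
    (sq_lt_of_svd_eq hU hV hU' hV' h (fun j => arctan_sq_lt (σ j)) i)

/-- the logarithm map takes values in horizontal vectors with
singular values below `π/2`.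
Let `Y, Y' ∈ ℝ^{n×p}` have orthonormal columns with `YᵀY'` invertible, set
`W = Y'(YᵀY')⁻¹ − Y` and let `W = U Σ Vᵀ` be a thin SVD. Then `YᵀW = 0`, and
`Z = U arctan(Σ) Vᵀ` satisfies `ZᵀY = 0` and every singular value of `Z`
(i.e., the diagonal of any thin SVD of `Z`) is strictly less than `π/2`. -/
theorem log_image_horizontal_and_below_cut
    (n p : ℕ) (hp : 0 < p) (hpn : p ≤ n)
    (Y Y' U : Matrix (Fin n) (Fin p) ℝ) (V : Matrix (Fin p) (Fin p) ℝ)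
    (σ : Fin p → ℝ)
    (hY : Yᵀ * Y = 1) (hY' : Y'ᵀ * Y' = 1) (hinv : IsUnit (Yᵀ * Y'))
    (hU : Uᵀ * U = 1) (hV : Vᵀ * V = 1)
    (hσ : ∀ i, 0 ≤ σ i)
    (hSVD : Y' * (Yᵀ * Y')⁻¹ - Y = U * Matrix.diagonal σ * Vᵀ) :
    Yᵀ * (Y' * (Yᵀ * Y')⁻¹ - Y) = 0 ∧
    (U * Matrix.diagonal (fun i => Real.arctan (σ i)) * Vᵀ)ᵀ * Y = 0 ∧
    (∀ (U' : Matrix (Fin n) (Fin p) ℝ) (V' : Matrix (Fin p) (Fin p) ℝ)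
        (μ : Fin p → ℝ),
      U'ᵀ * U' = 1 → V'ᵀ * V' = 1 → (∀ i, 0 ≤ μ i) →
      U * Matrix.diagonal (fun i => Real.arctan (σ i)) * Vᵀ =
        U' * Matrix.diagonal μ * V'ᵀ →
      ∀ i, μ i < Real.pi / 2) :=
  log_image_horizontal_and_below_cut_general n p Y Y' U V σ hY hinv hU hV hSVD
end

section
/- Let n ≥ p ≥ 1 and let Y, Z ∈ ℝ^{n×p} satisfy YᵀY = I_p and ZᵀY = 0. Let Z = U Θ Vᵀ be a thin SVD of Z. Then Yᵀ(Y V cos(Θ) + U sin(Θ)) = V cos(Θ). Moreover, if every diagonal entry θ_i of Θ satisfies 0 ≤ θ_i < π/2, then this matrix V cos(Θ) is invertible. Consequently, if Y' := Y V cos(Θ) + U sin(Θ) and all singular values of Z are strictly less than π/2, then YᵀY' is invertible. -/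
open Matrix

/-! The tangent condition `ZᵀY = 0` forces `Θ UᵀY = 0`, so the columns of `U` carrying a nonzero
angle are orthogonal to `Y`; since `sin 0 = 0` the remaining columns drop out of `U sin Θ` as well,
hence `Yᵀ(Y V cos Θ + U sin Θ) = V cos Θ`. For angles in `[0, π/2)` the cosines are positive, so
`V cos Θ` is a product of an orthogonal and an invertible diagonal matrix. -/

theorem Matrix.diagonal_mul_eq_zero_of_diagonal_mul_eq_zero {m n α : Type*} [Fintype m] [DecidableEq m]
    [NonUnitalNonAssocSemiring α] [NoZeroDivisors α] {d e : m → α} {A : Matrix m n α}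
    (hA : diagonal d * A = 0) (hde : ∀ i, d i = 0 → e i = 0) :
    diagonal e * A = 0 := by
  ext i j
  have hij : d i * A i j = 0 := by simpa only [diagonal_mul, zero_apply] using congrFun₂ hA i j
  rw [diagonal_mul, zero_apply]
  rcases mul_eq_zero.mp hij with hd | hA
  · rw [hde i hd, zero_mul]
  · rw [hA, mul_zero]

theorem Matrix.diagonal_mul_transpose_mul_eq_zero {m n R : Type*} [Fintype m] [Fintype n]
    [DecidableEq n] [CommRing R] {U Y : Matrix m n R} {V : Matrix n n R} {θ : n → R}
    (hV : Vᵀ * V = 1) (hZY : (U * diagonal θ * Vᵀ)ᵀ * Y = 0) :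
    diagonal θ * (Uᵀ * Y) = 0 := by
  have hVθ : V * (diagonal θ * (Uᵀ * Y)) = 0 := by
    simpa only [transpose_mul, transpose_transpose, diagonal_transpose, Matrix.mul_assoc]
      using hZY
  simpa only [← Matrix.mul_assoc, hV, Matrix.one_mul, Matrix.mul_zero] using congrArg (Vᵀ * ·) hVθ

theorem Matrix.transpose_mul_add_mul_eq_of_mul_transpose_mul_eq_zero {m n R : Type*}
    [Fintype m] [Fintype n] [DecidableEq n] [CommRing R] {Y U : Matrix m n R}
    (A : Matrix n n R) (s : n → R) (hY : Yᵀ * Y = 1) (hsUY : diagonal s * (Uᵀ * Y) = 0) :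
    Yᵀ * (Y * A + U * diagonal s) = A := by
  have hYUs : Yᵀ * U * diagonal s = 0 := by
    simpa only [transpose_mul, transpose_transpose, diagonal_transpose, transpose_zero,
      Matrix.mul_assoc] using congrArg transpose hsUY
  rw [Matrix.mul_add, ← Matrix.mul_assoc, hY, Matrix.one_mul, ← Matrix.mul_assoc, hYUs,
    add_zero]

theorem Matrix.isUnit_diagonal_cos {n : Type*} [Fintype n] [DecidableEq n] {θ : n → ℝ}
    (hθ : ∀ i, θ i ∈ Set.Ioo (-(Real.pi / 2)) (Real.pi / 2)) :
    IsUnit (diagonal fun i => Real.cos (θ i)) :=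
  isUnit_diagonal.mpr <| Pi.isUnit_iff.mpr fun i => (Real.cos_pos_of_mem_Ioo (hθ i)).ne'.isUnit

theorem exp_lands_in_log_domain_general
    (n p : ℕ)
    (Y Z U : Matrix (Fin n) (Fin p) ℝ) (V : Matrix (Fin p) (Fin p) ℝ)
    (θ : Fin p → ℝ)
    (hY : Yᵀ * Y = 1) (hZ : Zᵀ * Y = 0)
    (hV : Vᵀ * V = 1)
    (hθ0 : ∀ i, 0 ≤ θ i)
    (hSVD : Z = U * Matrix.diagonal θ * Vᵀ) :
    Yᵀ * (Y * V * Matrix.diagonal (fun i => Real.cos (θ i)) +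
        U * Matrix.diagonal (fun i => Real.sin (θ i))) =
      V * Matrix.diagonal (fun i => Real.cos (θ i)) ∧
    ((∀ i, θ i < Real.pi / 2) →
      IsUnit (V * Matrix.diagonal (fun i => Real.cos (θ i)))) ∧
    ((∀ i, θ i < Real.pi / 2) →
      IsUnit (Yᵀ * (Y * V * Matrix.diagonal (fun i => Real.cos (θ i)) +
        U * Matrix.diagonal (fun i => Real.sin (θ i))))) := by
  have hθUY : diagonal θ * (Uᵀ * Y) = 0 :=
    diagonal_mul_transpose_mul_eq_zero hV (hSVD ▸ hZ)
  have hsinUY : diagonal (fun i => Real.sin (θ i)) * (Uᵀ * Y) = 0 :=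
    diagonal_mul_eq_zero_of_diagonal_mul_eq_zero hθUY fun i hi => by rw [hi, Real.sin_zero]
  have hproj := transpose_mul_add_mul_eq_of_mul_transpose_mul_eq_zero
    (V * diagonal fun i => Real.cos (θ i)) _ hY hsinUY
  rw [← Matrix.mul_assoc] at hproj
  have hunit (hθ : ∀ i, θ i < Real.pi / 2) :
      IsUnit (V * diagonal fun i => Real.cos (θ i)) :=
    (IsUnit.of_mul_eq_one_right Vᵀ hV).mul <|
      isUnit_diagonal_cos fun i => ⟨by linarith [Real.pi_pos, hθ0 i], hθ i⟩
  exact ⟨hproj, hunit, fun hθ => hproj ▸ hunit hθ⟩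

/-- matrix form of the inclusion `Exp_ω(V_ω) ⊆ U_ω`.
Let `YᵀY = Iₚ`, `ZᵀY = 0`, and `Z = UΘVᵀ` be a thin SVD. Then
`Yᵀ(Y V cos Θ + U sin Θ) = V cos Θ`; if moreover every diagonal entry of `Θ`
satisfies `0 ≤ θᵢ < π/2`, then `V cos Θ` is invertible, and consequently
`YᵀY'` is invertible where `Y' = Y V cos Θ + U sin Θ`. -/
theorem exp_lands_in_log_domain
    (n p : ℕ) (hp : 0 < p) (hpn : p ≤ n)
    (Y Z U : Matrix (Fin n) (Fin p) ℝ) (V : Matrix (Fin p) (Fin p) ℝ)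
    (θ : Fin p → ℝ)
    (hY : Yᵀ * Y = 1) (hZ : Zᵀ * Y = 0)
    (hU : Uᵀ * U = 1) (hV : Vᵀ * V = 1)
    (hθ0 : ∀ i, 0 ≤ θ i)
    (hSVD : Z = U * Matrix.diagonal θ * Vᵀ) :
    Yᵀ * (Y * V * Matrix.diagonal (fun i => Real.cos (θ i)) +
        U * Matrix.diagonal (fun i => Real.sin (θ i))) =
      V * Matrix.diagonal (fun i => Real.cos (θ i)) ∧
    ((∀ i, θ i < Real.pi / 2) →
      IsUnit (V * Matrix.diagonal (fun i => Real.cos (θ i)))) ∧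
    ((∀ i, θ i < Real.pi / 2) →
      IsUnit (Yᵀ * (Y * V * Matrix.diagonal (fun i => Real.cos (θ i)) +
        U * Matrix.diagonal (fun i => Real.sin (θ i))))) :=
  exp_lands_in_log_domain_general n p Y Z U V θ hY hZ hV hθ0 hSVD
end

section
/- Let n, p be positive integers with min(p, n−p) ≥ 2, and let Y ∈ ℝ^{n×p} have orthonormal columns (YᵀY = I_p). Then there exists a matrix Z ∈ ℝ^{n×p} with ZᵀY = 0 whose Frobenius norm satisfies ‖Z‖_F ≥ π/2 while every singular value of Z is strictly less than π/2. -/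
/-!
Choose two orthonormal vectors `u₁, u₂` orthogonal to the columns of `Y` (possible as
`n - p ≥ 2`) and put `Z = r (u₁ e₁ᵀ + u₂ e₂ᵀ)` with `r = π / (2√2)`. Then `ZᵀZ = r² diag(1,1,0,…)`,
so `‖Z‖_F² = 2r² = (π/2)²`, while `r² I - ZᵀZ` is positive semidefinite. Conjugating it by `V` in
any decomposition `Z = U diag(μ) Vᵀ` gives `diag(r² - μᵢ²)`, whence every `μᵢ ≤ r < π/2`.
-/

open Matrix

namespace Matrix

variable {m n : Type*} [Fintype m] [Fintype n]

theorem exists_orthonormal_columns_transpose_mul_eq_zero (Y : Matrix m n ℝ) (k : ℕ)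
    (hk : k + Fintype.card n ≤ Fintype.card m) :
    ∃ W : Matrix m (Fin k) ℝ, Wᵀ * W = 1 ∧ Wᵀ * Y = 0 := by
  let S : Submodule ℝ (EuclideanSpace ℝ m) :=
    Submodule.span ℝ (Set.range fun j => WithLp.toLp 2 (Yᵀ j))
  have hS : Module.finrank ℝ S ≤ Fintype.card n := finrank_range_le_card _
  have hSperp : k ≤ Module.finrank ℝ Sᗮ := by
    have := S.finrank_add_finrank_orthogonal
    rw [finrank_euclideanSpace] at this
    omega
  let b := stdOrthonormalBasis ℝ Sᗮ
  let w : Fin k → EuclideanSpace ℝ m := fun i => b (Fin.castLE hSperp i)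
  have hw : Orthonormal ℝ w :=
    (b.orthonormal.comp _ (Fin.castLE_injective hSperp)).comp_linearIsometry Sᗮ.subtypeₗᵢ
  refine ⟨of fun x i => w i x, ?_, ?_⟩
  · rw [← gram_eq_one_iff_orthonormal.mpr hw]
    ext i j
    simp only [mul_apply, transpose_apply, of_apply, gram_apply,
      EuclideanSpace.inner_eq_star_dotProduct, dotProduct, star_trivial]
    exact Finset.sum_congr rfl fun _ _ => mul_comm _ _
  · ext i j
    have hwi : w i ∈ Sᗮ := Submodule.coe_mem _
    have := (Submodule.mem_orthogonal' S _).mp hwi _ (Submodule.subset_span ⟨j, rfl⟩)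
    simp only [EuclideanSpace.inner_eq_star_dotProduct, dotProduct, star_trivial] at this
    simp only [mul_apply, transpose_apply, of_apply, zero_apply]
    rw [← this]
    exact Finset.sum_congr rfl fun _ _ => mul_comm _ _

theorem posSemidef_one_sub_transpose_mul_self {k : Type*} [Fintype k] [DecidableEq k]
    [DecidableEq n] (P : Matrix k n ℝ) (hP : P * Pᵀ = 1) : (1 - Pᵀ * P).PosSemidef := by
  set Q : Matrix n n ℝ := 1 - Pᵀ * P
  have hQ : Qᴴ * Q = Q := by
    rw [conjTranspose_eq_transpose_of_trivial]
    simp only [Q, transpose_sub, transpose_one, transpose_mul, transpose_transpose, sub_mul,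
      mul_sub, Matrix.one_mul, Matrix.mul_one, Matrix.mul_assoc, ← Matrix.mul_assoc P Pᵀ, hP]
    abel
  exact hQ ▸ posSemidef_conjTranspose_mul_self Q

theorem sq_le_of_posSemidef_smul_one_sub [DecidableEq n] {Z : Matrix m n ℝ} {a : ℝ}
    (hZ : (a • 1 - Zᵀ * Z).PosSemidef) {U : Matrix m n ℝ} {V : Matrix n n ℝ} {μ : n → ℝ}
    (hU : Uᵀ * U = 1) (hV : Vᵀ * V = 1) (hZUV : Z = U * diagonal μ * Vᵀ) (i : n) :
    μ i ^ 2 ≤ a := by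
  have hZZ : Zᵀ * Z = V * diagonal (fun i => μ i ^ 2) * Vᵀ := by
    rw [hZUV, transpose_mul, transpose_mul, transpose_transpose, diagonal_transpose]
    simp only [Matrix.mul_assoc]
    rw [← Matrix.mul_assoc Uᵀ U, hU, Matrix.one_mul, ← Matrix.mul_assoc (diagonal μ),
      diagonal_mul_diagonal]
    simp only [sq]
  have hconj : Vᵀ * (a • 1 - Zᵀ * Z) * V = diagonal fun i => a - μ i ^ 2 := by
    rw [hZZ, mul_sub, sub_mul, Matrix.mul_smul, Matrix.smul_mul, Matrix.mul_one, hV]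
    simp only [← Matrix.mul_assoc]
    rw [hV, Matrix.one_mul, Matrix.mul_assoc, hV, Matrix.mul_one, ← diagonal_one,
      ← diagonal_smul, diagonal_sub]
    simp only [Pi.smul_apply, smul_eq_mul, mul_one]
  have := (hZ.conjTranspose_mul_mul_same V).diag_nonneg (i := i)
  rw [conjTranspose_eq_transpose_of_trivial, hconj, diagonal_apply_eq] at this
  linarith

theorem exists_contraction_transpose_mul_eq_zero_trace_eq (Y : Matrix m n ℝ) [DecidableEq n]
    {k : ℕ} (hkn : k ≤ Fintype.card n) (hkm : k + Fintype.card n ≤ Fintype.card m) :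
    ∃ A : Matrix m n ℝ, Aᵀ * Y = 0 ∧ (Aᵀ * A).trace = k ∧ (1 - Aᵀ * A).PosSemidef := by
  obtain ⟨W, hW, hWY⟩ := exists_orthonormal_columns_transpose_mul_eq_zero Y k hkm
  obtain ⟨e⟩ : Nonempty (Fin k ↪ n) := Function.Embedding.nonempty_of_card_le (by simpa using hkn)
  set P : Matrix (Fin k) n ℝ := (1 : Matrix n n ℝ).submatrix e id
  have hP : P * Pᵀ = 1 := by
    rw [transpose_submatrix, transpose_one, ← submatrix_mul _ _ _ _ _ Function.bijective_id,
      Matrix.mul_one, submatrix_one _ e.injective]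
  have hAA : (W * P)ᵀ * (W * P) = Pᵀ * P := by
    rw [transpose_mul, Matrix.mul_assoc, ← Matrix.mul_assoc Wᵀ, hW, Matrix.one_mul]
  refine ⟨W * P, ?_, ?_, hAA ▸ posSemidef_one_sub_transpose_mul_self P hP⟩
  · rw [transpose_mul, Matrix.mul_assoc, hWY, Matrix.mul_zero]
  · rw [hAA, trace_mul_comm, hP, trace_one, Fintype.card_fin]

end Matrix

theorem cut_locus_beats_injectivity_radius_general
    (n p : ℕ) (hmin : 2 ≤ min p (n - p))
    (Y : Matrix (Fin n) (Fin p) ℝ) :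
    ∃ Z : Matrix (Fin n) (Fin p) ℝ,
      Zᵀ * Y = 0 ∧
      Real.pi / 2 ≤ Real.sqrt ((Zᵀ * Z).trace) ∧
      (∀ (U : Matrix (Fin n) (Fin p) ℝ) (V : Matrix (Fin p) (Fin p) ℝ)
          (μ : Fin p → ℝ),
        Uᵀ * U = 1 → Vᵀ * V = 1 → (∀ i, 0 ≤ μ i) →
        Z = U * Matrix.diagonal μ * Vᵀ →
        ∀ i, μ i < Real.pi / 2) := by
  obtain ⟨A, hAY, htr, hA⟩ := exists_contraction_transpose_mul_eq_zero_trace_eq Y (k := 2)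
    (by rw [Fintype.card_fin]; omega)
    (by rw [Fintype.card_fin, Fintype.card_fin]; omega)
  set r := Real.pi / 2 / Real.sqrt 2
  have hr : r ^ 2 = (Real.pi / 2) ^ 2 / 2 := by rw [div_pow, Real.sq_sqrt zero_le_two]
  have hZZ : (r • A)ᵀ * (r • A) = r ^ 2 • (Aᵀ * A) := by
    rw [transpose_smul, Matrix.smul_mul, Matrix.mul_smul, smul_smul, sq]
  refine ⟨r • A, by rw [transpose_smul, smul_mul, hAY, smul_zero], ?_, ?_⟩
  · rw [hZZ, trace_smul, htr, hr, smul_eq_mul, Nat.cast_ofNat, div_mul_cancel₀ _ two_ne_zero,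
      Real.sqrt_sq (by positivity)]
  · intro U V μ hU hV _ hZ i
    have hμ : μ i ^ 2 ≤ r ^ 2 :=
      sq_le_of_posSemidef_smul_one_sub (by rw [hZZ, ← smul_sub]; exact hA.smul (sq_nonneg r))
        hU hV hZ i
    have hlt : μ i ^ 2 < (Real.pi / 2) ^ 2 :=
      hμ.trans_lt (hr ▸ half_lt_self (by positivity))
    exact (le_abs_self _).trans_lt (abs_lt_of_sq_lt_sq hlt (by positivity))

/-- the cut-locus condition strictly improves on the
injectivity radius.
Let `min(p, n−p) ≥ 2` and let `Y ∈ ℝ^{n×p}` have orthonormal columns. Then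
there exists `Z ∈ ℝ^{n×p}` with `ZᵀY = 0`, Frobenius norm
`‖Z‖_F = sqrt(tr(ZᵀZ)) ≥ π/2`, while every singular value of `Z` (i.e., the
diagonal of any thin SVD of `Z`) is strictly less than `π/2`. -/
theorem cut_locus_beats_injectivity_radius
    (n p : ℕ) (hmin : 2 ≤ min p (n - p)) (hpn : p ≤ n)
    (Y : Matrix (Fin n) (Fin p) ℝ) (hY : Yᵀ * Y = 1) :
    ∃ Z : Matrix (Fin n) (Fin p) ℝ,
      Zᵀ * Y = 0 ∧
      Real.pi / 2 ≤ Real.sqrt ((Zᵀ * Z).trace) ∧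
      (∀ (U : Matrix (Fin n) (Fin p) ℝ) (V : Matrix (Fin p) (Fin p) ℝ)
          (μ : Fin p → ℝ),
        Uᵀ * U = 1 → Vᵀ * V = 1 → (∀ i, 0 ≤ μ i) →
        Z = U * Matrix.diagonal μ * Vᵀ →
        ∀ i, μ i < Real.pi / 2) :=
  cut_locus_beats_injectivity_radius_general n p hmin Y
end

section
/- Let n ≥ p ≥ 1 and let Y ∈ ℝ^{n×p} have orthonormal columns (YᵀY = I_p). Let Z₁, Z₂ ∈ ℝ^{n×p} satisfy Z₁ᵀY = 0 and Z₂ᵀY = 0, and suppose every singular value of Z₁ and of Z₂ is strictly less than π/2. Let Z₁ = U₁ Θ₁ V₁ᵀ and Z₂ = U₂ Θ₂ V₂ᵀ be thin SVDs. If the column spaces of Y V₁ cos(Θ₁) + U₁ sin(Θ₁) and of Y V₂ cos(Θ₂) + U₂ sin(Θ₂) coincide, then Z₁ = Z₂. -/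
open Matrix

noncomputable def gval (x : ℝ) : ℝ := if x = 0 then 1 else x / (Real.sin x * Real.cos x)

lemma gval_identity {x : ℝ} (h0 : 0 ≤ x) (hlt : x < Real.pi / 2) :
    Real.sin x * (gval x * Real.cos x) = x := by
  rcases eq_or_lt_of_le h0 with h | h
  · simp [gval, ← h]
  · have hπ : 0 < Real.pi := Real.pi_pos
    have hs : Real.sin x ≠ 0 :=
      ne_of_gt (Real.sin_pos_of_pos_of_lt_pi h (by linarith))
    have hc : Real.cos x ≠ 0 :=
      ne_of_gt (Real.cos_pos_of_mem_Ioo ⟨by linarith, hlt⟩)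
    rw [gval, if_neg (ne_of_gt h)]
    field_simp

lemma conj_aeval {p : ℕ} (M A : Matrix (Fin p) (Fin p) ℝ)
    (h1 : M * Mᵀ = 1) (h2 : Mᵀ * M = 1) (q : Polynomial ℝ) :
    M * (Polynomial.aeval A q) * Mᵀ = Polynomial.aeval (M * A * Mᵀ) q := by
  induction q using Polynomial.induction_on' with
  | add f g hf hg => simp [map_add, Matrix.mul_add, Matrix.add_mul, hf, hg]
  | monomial n a =>
      have hpow : ∀ k : ℕ, (M * A * Mᵀ) ^ k = M * A ^ k * Mᵀ := by
        intro k
        induction k with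
        | zero => simpa using h1.symm
        | succ k ih =>
            have h3 : Mᵀ * (M * (A * Mᵀ)) = A * Mᵀ := by
              rw [← Matrix.mul_assoc, h2, Matrix.one_mul]
            rw [pow_succ, ih, pow_succ]
            simp only [Matrix.mul_assoc, h3]
      simp [Polynomial.aeval_monomial, hpow, Algebra.algebraMap_eq_smul_one,
        Matrix.mul_smul, Matrix.smul_mul]

lemma aeval_diagonal {p : ℕ} (d : Fin p → ℝ) (q : Polynomial ℝ) :
    Polynomial.aeval (Matrix.diagonal d) q
      = Matrix.diagonal (fun i => q.eval (d i)) := by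
  induction q using Polynomial.induction_on' with
  | add f g hf hg => simp [hf, hg, Matrix.diagonal_add]
  | monomial n a =>
      simp [Polynomial.aeval_monomial, Matrix.diagonal_pow,
        Algebra.algebraMap_eq_smul_one, ← Matrix.diagonal_one,
        Matrix.diagonal_smul, Matrix.diagonal_mul_diagonal,
        ← Matrix.diagonal_smul, smul_eq_mul]

set_option maxHeartbeats 1000000

/-- injectivity of the Grassmannian exponential inside the
cut-locus.
Let `YᵀY = Iₚ`, and let `Z₁, Z₂` be horizontal at `Y` (`Zᵢᵀ Y = 0`) with all
singular values strictly less than `π/2`, with thin SVDs `Zᵢ = Uᵢ Θᵢ Vᵢᵀ`. If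
the column spaces of `Y V₁ cos Θ₁ + U₁ sin Θ₁` and `Y V₂ cos Θ₂ + U₂ sin Θ₂`
coincide, then `Z₁ = Z₂`. -/
theorem exp_injective_inside_cut_locus
    (n p : ℕ) (hp : 0 < p) (hpn : p ≤ n)
    (Y Z₁ Z₂ U₁ U₂ : Matrix (Fin n) (Fin p) ℝ)
    (V₁ V₂ : Matrix (Fin p) (Fin p) ℝ)
    (θ₁ θ₂ : Fin p → ℝ)
    (hY : Yᵀ * Y = 1)
    (hZ₁ : Z₁ᵀ * Y = 0) (hZ₂ : Z₂ᵀ * Y = 0)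
    (hU₁ : U₁ᵀ * U₁ = 1) (hV₁ : V₁ᵀ * V₁ = 1)
    (hU₂ : U₂ᵀ * U₂ = 1) (hV₂ : V₂ᵀ * V₂ = 1)
    (hθ₁0 : ∀ i, 0 ≤ θ₁ i) (hθ₁lt : ∀ i, θ₁ i < Real.pi / 2)
    (hθ₂0 : ∀ i, 0 ≤ θ₂ i) (hθ₂lt : ∀ i, θ₂ i < Real.pi / 2)
    (hSVD₁ : Z₁ = U₁ * Matrix.diagonal θ₁ * V₁ᵀ)
    (hSVD₂ : Z₂ = U₂ * Matrix.diagonal θ₂ * V₂ᵀ)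
    (hcol : LinearMap.range
        (Y * V₁ * Matrix.diagonal (fun i => Real.cos (θ₁ i)) +
          U₁ * Matrix.diagonal (fun i => Real.sin (θ₁ i))).mulVecLin =
      LinearMap.range
        (Y * V₂ * Matrix.diagonal (fun i => Real.cos (θ₂ i)) +
          U₂ * Matrix.diagonal (fun i => Real.sin (θ₂ i))).mulVecLin) :
    Z₁ = Z₂ := by
  set C₁ : Matrix (Fin p) (Fin p) ℝ := Matrix.diagonal (fun i => Real.cos (θ₁ i)) with hC₁def
  set C₂ : Matrix (Fin p) (Fin p) ℝ := Matrix.diagonal (fun i => Real.cos (θ₂ i)) with hC₂def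
  set S₁ : Matrix (Fin p) (Fin p) ℝ := Matrix.diagonal (fun i => Real.sin (θ₁ i)) with hS₁def
  set S₂ : Matrix (Fin p) (Fin p) ℝ := Matrix.diagonal (fun i => Real.sin (θ₂ i)) with hS₂def
  set W₁ : Matrix (Fin n) (Fin p) ℝ := Y * V₁ * C₁ + U₁ * S₁ with hW₁def
  set W₂ : Matrix (Fin n) (Fin p) ℝ := Y * V₂ * C₂ + U₂ * S₂ with hW₂def
  have hC₁T : C₁ᵀ = C₁ := by rw [hC₁def]; exact Matrix.diagonal_transpose _
  have hC₂T : C₂ᵀ = C₂ := by rw [hC₂def]; exact Matrix.diagonal_transpose _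
  have hS₁T : S₁ᵀ = S₁ := by rw [hS₁def]; exact Matrix.diagonal_transpose _
  have hS₂T : S₂ᵀ = S₂ := by rw [hS₂def]; exact Matrix.diagonal_transpose _
  -- Step A : S * (Uᵀ * Y) = 0
  have stepA : ∀ (U : Matrix (Fin n) (Fin p) ℝ) (V : Matrix (Fin p) (Fin p) ℝ)
      (θ : Fin p → ℝ), V ᵀ * V = 1 → (U * Matrix.diagonal θ * Vᵀ)ᵀ * Y = 0 →
      Matrix.diagonal (fun i => Real.sin (θ i)) * (Uᵀ * Y) = 0 := by
    intro U V θ hV hZ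
    have h0 : Matrix.diagonal θ * (Uᵀ * Y) = 0 := by
      have h : V * (Matrix.diagonal θ * (Uᵀ * Y)) = 0 := by
        calc V * (Matrix.diagonal θ * (Uᵀ * Y))
            = (U * Matrix.diagonal θ * Vᵀ)ᵀ * Y := by
              simp [Matrix.transpose_mul, Matrix.diagonal_transpose, Matrix.mul_assoc]
          _ = 0 := hZ
      have h2 := congrArg (fun X => Vᵀ * X) h
      simpa [← Matrix.mul_assoc, hV] using h2
    ext i j
    have h3 : θ i * (Uᵀ * Y) i j = 0 := by
      have := congrFun (congrFun h0 i) j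
      simpa [Matrix.diagonal_mul] using this
    simp only [Matrix.diagonal_mul, Matrix.zero_apply]
    rcases mul_eq_zero.mp h3 with h | h
    · simp [h]
    · simp [h]
  have hSA₁ : S₁ * (U₁ᵀ * Y) = 0 := stepA U₁ V₁ θ₁ hV₁ (hSVD₁ ▸ hZ₁)
  have hSA₂ : S₂ * (U₂ᵀ * Y) = 0 := stepA U₂ V₂ θ₂ hV₂ (hSVD₂ ▸ hZ₂)
  -- Yᵀ * (U * S) = 0
  have hYU₁ : Yᵀ * (U₁ * S₁) = 0 := by
    have := congrArg Matrix.transpose hSA₁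
    simpa [Matrix.transpose_mul, hS₁T, Matrix.mul_assoc] using this
  have hYU₂ : Yᵀ * (U₂ * S₂) = 0 := by
    have := congrArg Matrix.transpose hSA₂
    simpa [Matrix.transpose_mul, hS₂T, Matrix.mul_assoc] using this
  -- Step B : Yᵀ * W = V * C
  have hYW₁ : Yᵀ * W₁ = V₁ * C₁ := by
    rw [hW₁def, Matrix.mul_add]
    rw [show Y * V₁ * C₁ = Y * (V₁ * C₁) by rw [Matrix.mul_assoc],
      ← Matrix.mul_assoc, hY, Matrix.one_mul, hYU₁, add_zero]
  have hYW₂ : Yᵀ * W₂ = V₂ * C₂ := by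
    rw [hW₂def, Matrix.mul_add]
    rw [show Y * V₂ * C₂ = Y * (V₂ * C₂) by rw [Matrix.mul_assoc],
      ← Matrix.mul_assoc, hY, Matrix.one_mul, hYU₂, add_zero]
  -- C² + S² = 1
  have hCS₁ : C₁ * C₁ + S₁ * S₁ = 1 := by
    rw [hC₁def, hS₁def, Matrix.diagonal_mul_diagonal, Matrix.diagonal_mul_diagonal,
      Matrix.diagonal_add]
    have hfun : (fun i => Real.cos (θ₁ i) * Real.cos (θ₁ i)
        + Real.sin (θ₁ i) * Real.sin (θ₁ i)) = fun _ => (1 : ℝ) := by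
      funext i
      have h := Real.sin_sq_add_cos_sq (θ₁ i)
      rw [pow_two, pow_two] at h
      linarith
    rw [hfun, Matrix.diagonal_one]
  have hCS₂ : C₂ * C₂ + S₂ * S₂ = 1 := by
    rw [hC₂def, hS₂def, Matrix.diagonal_mul_diagonal, Matrix.diagonal_mul_diagonal,
      Matrix.diagonal_add]
    have hfun : (fun i => Real.cos (θ₂ i) * Real.cos (θ₂ i)
        + Real.sin (θ₂ i) * Real.sin (θ₂ i)) = fun _ => (1 : ℝ) := by
      funext i
      have h := Real.sin_sq_add_cos_sq (θ₂ i)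
      rw [pow_two, pow_two] at h
      linarith
    rw [hfun, Matrix.diagonal_one]
  -- Step C : W₁ᵀ * W₁ = 1
  have hW₁W₁ : W₁ᵀ * W₁ = 1 := by
    have expand : W₁ᵀ * W₁ =
        C₁ * ((V₁ᵀ * (Yᵀ * Y)) * (V₁ * C₁)) + C₁ * (V₁ᵀ * (Yᵀ * (U₁ * S₁)))
          + S₁ * (U₁ᵀ * Y) * (V₁ * C₁) + S₁ * ((U₁ᵀ * U₁) * S₁) := by
      rw [hW₁def]
      simp only [Matrix.transpose_add, Matrix.transpose_mul, Matrix.diagonal_transpose,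
        Matrix.add_mul, Matrix.mul_add, Matrix.mul_assoc, hC₁def, hS₁def]
      abel
    rw [expand, hY, hYU₁, hSA₁, hU₁]
    simp only [Matrix.mul_zero, Matrix.zero_mul, add_zero, Matrix.one_mul, Matrix.mul_one]
    rw [show V₁ᵀ * (V₁ * C₁) = C₁ by rw [← Matrix.mul_assoc, hV₁, Matrix.one_mul]]
    exact hCS₁
  -- Step D : W₂ = W₁ * M
  have hle : ∀ v : Fin p → ℝ, ∃ u, W₁ *ᵥ u = W₂ *ᵥ v := by
    intro v
    have hmem : W₂ *ᵥ v ∈ LinearMap.range W₂.mulVecLin := ⟨v, rfl⟩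
    rw [← hcol] at hmem
    obtain ⟨u, hu⟩ := hmem
    exact ⟨u, hu⟩
  set M : Matrix (Fin p) (Fin p) ℝ := W₁ᵀ * W₂ with hMdef
  have hM : W₂ = W₁ * M := by
    have key : ∀ v : Fin p → ℝ, (W₁ * M) *ᵥ v = W₂ *ᵥ v := by
      intro v
      obtain ⟨u, hu⟩ := hle v
      have h1 : W₁ᵀ *ᵥ (W₂ *ᵥ v) = u := by
        rw [← hu, Matrix.mulVec_mulVec, hW₁W₁, Matrix.one_mulVec]
      rw [hMdef, ← Matrix.mulVec_mulVec, ← Matrix.mulVec_mulVec, h1, hu]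
    ext i j
    have := congrFun (key (Pi.single j 1)) i
    simpa [Matrix.mulVec_single] using this.symm
  -- Step E
  have hVC : V₂ * C₂ = V₁ * C₁ * M := by
    rw [← hYW₂, hM, ← Matrix.mul_assoc, hYW₁]
  have hUS : U₂ * S₂ = U₁ * S₁ * M := by
    have h : Y * V₂ * C₂ + U₂ * S₂ = Y * V₁ * C₁ * M + U₁ * S₁ * M := by
      rw [← hW₂def, hM, hW₁def, Matrix.add_mul]
    have h2 : Y * V₂ * C₂ = Y * V₁ * C₁ * M := by
      calc Y * V₂ * C₂ = Y * (V₂ * C₂) := by rw [Matrix.mul_assoc]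
        _ = Y * (V₁ * C₁ * M) := by rw [hVC]
        _ = Y * V₁ * C₁ * M := by simp only [Matrix.mul_assoc]
    rw [h2] at h
    exact add_left_cancel h
  -- squares conjugation
  have hC2sq : C₂ * C₂ = Mᵀ * (C₁ * C₁) * M := by
    calc C₂ * C₂ = C₂ * (V₂ᵀ * V₂) * C₂ := by rw [hV₂, Matrix.mul_one]
      _ = (V₂ * C₂)ᵀ * (V₂ * C₂) := by
          rw [Matrix.transpose_mul, hC₂T]; simp only [Matrix.mul_assoc]
      _ = (V₁ * C₁ * M)ᵀ * (V₁ * C₁ * M) := by rw [hVC]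
      _ = Mᵀ * (C₁ * (V₁ᵀ * V₁) * C₁) * M := by
          simp only [Matrix.transpose_mul, hC₁T, Matrix.mul_assoc]
      _ = Mᵀ * (C₁ * C₁) * M := by rw [hV₁, Matrix.mul_one]
  have hS2sq : S₂ * S₂ = Mᵀ * (S₁ * S₁) * M := by
    calc S₂ * S₂ = S₂ * (U₂ᵀ * U₂) * S₂ := by rw [hU₂, Matrix.mul_one]
      _ = (U₂ * S₂)ᵀ * (U₂ * S₂) := by
          rw [Matrix.transpose_mul, hS₂T]; simp only [Matrix.mul_assoc]
      _ = (U₁ * S₁ * M)ᵀ * (U₁ * S₁ * M) := by rw [hUS]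
      _ = Mᵀ * (S₁ * (U₁ᵀ * U₁) * S₁) * M := by
          simp only [Matrix.transpose_mul, hS₁T, Matrix.mul_assoc]
      _ = Mᵀ * (S₁ * S₁) * M := by rw [hU₁, Matrix.mul_one]
  have hMtM : Mᵀ * M = 1 := by
    have : C₂ * C₂ + S₂ * S₂ = Mᵀ * (C₁ * C₁ + S₁ * S₁) * M := by
      rw [Matrix.mul_add, Matrix.add_mul, ← hC2sq, ← hS2sq]
    rw [hCS₁, hCS₂, Matrix.mul_one] at this
    exact this.symm
  have hMMt : M * Mᵀ = 1 := mul_eq_one_comm.mpr hMtM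
  have hconj : M * (C₂ * C₂) * Mᵀ = C₁ * C₁ := by
    rw [hC2sq]
    calc M * (Mᵀ * (C₁ * C₁) * M) * Mᵀ
        = (M * Mᵀ) * (C₁ * C₁) * (M * Mᵀ) := by
          simp only [Matrix.mul_assoc]
      _ = C₁ * C₁ := by rw [hMMt, Matrix.one_mul, Matrix.mul_one]
  -- Step H : polynomial interpolation
  set s : Finset ℝ :=
    (Finset.univ.image fun i => Real.cos (θ₁ i) * Real.cos (θ₁ i)) ∪
      (Finset.univ.image fun i => Real.cos (θ₂ i) * Real.cos (θ₂ i)) with hsdef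
  set φ : ℝ → ℝ := fun c => gval (Real.arccos (Real.sqrt c)) with hφdef
  set q : Polynomial ℝ := Lagrange.interpolate s id φ with hqdef
  have hinj : Set.InjOn id (s : Set ℝ) := Function.injective_id.injOn
  have hφcos : ∀ (θ : ℝ), 0 ≤ θ → θ < Real.pi / 2 →
      φ (Real.cos θ * Real.cos θ) = gval θ := by
    intro θ h0 hlt
    have hπ : 0 < Real.pi := Real.pi_pos
    have hc : 0 ≤ Real.cos θ := Real.cos_nonneg_of_mem_Icc ⟨by linarith, le_of_lt hlt⟩
    rw [hφdef]
    simp only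
    rw [show Real.cos θ * Real.cos θ = Real.cos θ ^ 2 by ring, Real.sqrt_sq hc,
      Real.arccos_cos h0 (by linarith)]
  have heval₁ : ∀ i, q.eval (Real.cos (θ₁ i) * Real.cos (θ₁ i)) = gval (θ₁ i) := by
    intro i
    have hmem : Real.cos (θ₁ i) * Real.cos (θ₁ i) ∈ s := by
      rw [hsdef]
      exact Finset.mem_union_left _ (Finset.mem_image_of_mem _ (Finset.mem_univ i))
    have := Lagrange.eval_interpolate_at_node φ hinj hmem
    rw [hqdef]
    simpa [hφcos (θ₁ i) (hθ₁0 i) (hθ₁lt i)] using this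
  have heval₂ : ∀ i, q.eval (Real.cos (θ₂ i) * Real.cos (θ₂ i)) = gval (θ₂ i) := by
    intro i
    have hmem : Real.cos (θ₂ i) * Real.cos (θ₂ i) ∈ s := by
      rw [hsdef]
      exact Finset.mem_union_right _ (Finset.mem_image_of_mem _ (Finset.mem_univ i))
    have := Lagrange.eval_interpolate_at_node φ hinj hmem
    rw [hqdef]
    simpa [hφcos (θ₂ i) (hθ₂0 i) (hθ₂lt i)] using this
  set G₁ : Matrix (Fin p) (Fin p) ℝ := Matrix.diagonal (fun i => gval (θ₁ i)) with hG₁def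
  set G₂ : Matrix (Fin p) (Fin p) ℝ := Matrix.diagonal (fun i => gval (θ₂ i)) with hG₂def
  have hG₁ : Polynomial.aeval (C₁ * C₁) q = G₁ := by
    have hfun : (fun i => q.eval (Real.cos (θ₁ i) * Real.cos (θ₁ i)))
        = fun i => gval (θ₁ i) := funext heval₁
    rw [hC₁def, Matrix.diagonal_mul_diagonal, aeval_diagonal, hfun, hG₁def]
  have hG₂ : Polynomial.aeval (C₂ * C₂) q = G₂ := by
    have hfun : (fun i => q.eval (Real.cos (θ₂ i) * Real.cos (θ₂ i)))
        = fun i => gval (θ₂ i) := funext heval₂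
    rw [hC₂def, Matrix.diagonal_mul_diagonal, aeval_diagonal, hfun, hG₂def]
  have hMG : M * G₂ * Mᵀ = G₁ := by
    rw [← hG₂, ← hG₁, conj_aeval M (C₂ * C₂) hMMt hMtM q, hconj]
  -- Final assembly
  have hdiag₂ : Matrix.diagonal θ₂ = S₂ * (G₂ * C₂) := by
    have hfun : θ₂ = fun i => Real.sin (θ₂ i) * (gval (θ₂ i) * Real.cos (θ₂ i)) :=
      funext fun i => (gval_identity (hθ₂0 i) (hθ₂lt i)).symm
    rw [hS₂def, hG₂def, hC₂def, Matrix.diagonal_mul_diagonal, Matrix.diagonal_mul_diagonal,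
      ← hfun]
  have hdiag₁ : Matrix.diagonal θ₁ = S₁ * (G₁ * C₁) := by
    have hfun : θ₁ = fun i => Real.sin (θ₁ i) * (gval (θ₁ i) * Real.cos (θ₁ i)) :=
      funext fun i => (gval_identity (hθ₁0 i) (hθ₁lt i)).symm
    rw [hS₁def, hG₁def, hC₁def, Matrix.diagonal_mul_diagonal, Matrix.diagonal_mul_diagonal,
      ← hfun]
  have hCV₂ : C₂ * V₂ᵀ = Mᵀ * (C₁ * V₁ᵀ) := by
    have := congrArg Matrix.transpose hVC
    simpa [Matrix.transpose_mul, hC₁T, hC₂T, Matrix.mul_assoc] using this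
  rw [hSVD₁, hSVD₂, hdiag₁, hdiag₂]
  calc U₁ * (S₁ * (G₁ * C₁)) * V₁ᵀ
      = U₁ * S₁ * ((M * G₂ * Mᵀ) * (C₁ * V₁ᵀ)) := by
        rw [hMG]; simp only [Matrix.mul_assoc]
    _ = (U₁ * S₁ * M) * (G₂ * (Mᵀ * (C₁ * V₁ᵀ))) := by simp only [Matrix.mul_assoc]
    _ = U₂ * S₂ * (G₂ * (C₂ * V₂ᵀ)) := by rw [← hUS, hCV₂]
    _ = U₂ * (S₂ * (G₂ * C₂)) * V₂ᵀ := by simp only [Matrix.mul_assoc]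
end

section
/- Let n ≥ p ≥ 1 and let Y, Y' ∈ ℝ^{n×p} both have orthonormal columns, with YᵀY' invertible. Then there exist a matrix Z ∈ ℝ^{n×p} with ZᵀY = 0, all of whose singular values are strictly less than π/2, and a thin SVD Z = U Θ Vᵀ, such that the column space of Y V cos(Θ) + U sin(Θ) equals the column space of Y'. -/
/-!
The matrix `B = Y' (YᵀY')⁻¹ - Y` is horizontal (`BᵀY = 0`) and `Y + B` spans the column space
of `Y'`. Take a thin SVD `B = U diag σ Vᵀ` and put `θ = arctan σ`. Then `U sin θ = B V cos θ`, so
`Y V cos θ + U sin θ = (Y + B) V cos θ = Y' (YᵀY')⁻¹ V cos θ`, which has the column space of `Y'`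
because `cos θ > 0`. Finally `Z = U diag θ Vᵀ` is horizontal: `θ` vanishes wherever `σ` does, so
`Z` factors as `B` times a square matrix.
-/

open Matrix

theorem exists_orthonormalBasis_smul_eq_of_pairwise_inner_eq_zero
    {𝕜 E ι : Type*} [RCLike 𝕜] [NormedAddCommGroup E] [InnerProductSpace 𝕜 E]
    [FiniteDimensional 𝕜 E] [Fintype ι] (hcard : Module.finrank 𝕜 E = Fintype.card ι)
    {f : ι → E} (hf : Pairwise fun i j => inner 𝕜 (f i) (f j) = 0) :
    ∃ b : OrthonormalBasis ι 𝕜 E, ∀ i, f i = (‖f i‖ : 𝕜) • b i := by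
  set s : Set ι := {i | f i ≠ 0}
  have hnormalized : Orthonormal 𝕜 (s.domRestrict fun i => (‖f i‖⁻¹ : 𝕜) • f i) := by
    refine ⟨fun i => norm_smul_inv_norm i.2, fun i j hij => ?_⟩
    simp only [Set.domRestrict_apply, inner_smul_left, inner_smul_right,
      hf (Subtype.coe_ne_coe.2 hij), mul_zero]
  obtain ⟨b, hb⟩ := hnormalized.exists_orthonormalBasis_extension_of_card_eq hcard
  refine ⟨b, fun i => ?_⟩
  by_cases hi : f i = 0
  · simp [hi]
  · rw [hb i hi, smul_smul, mul_inv_cancel₀ (by simpa using hi), one_smul]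

namespace Matrix

variable {m k : Type*} [Fintype k] [DecidableEq k]

theorem exists_orthonormal_mul_diagonal_eq_of_orthogonal_columns [Fintype m]
    (hk : Fintype.card k ≤ Fintype.card m) (C : Matrix m k ℝ)
    (hC : Pairwise fun i j => (Cᵀ * C) i j = 0) :
    ∃ (U : Matrix m k ℝ) (σ : k → ℝ), Uᵀ * U = 1 ∧ 0 ≤ σ ∧ C = U * diagonal σ := by
  -- pad the columns of `C` with zero vectors to a family of `card m` vectors
  let f : k ⊕ Fin (Fintype.card m - Fintype.card k) → EuclideanSpace ℝ m :=
    Sum.elim (fun j => WithLp.toLp 2 (Cᵀ j)) 0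
  have hcard : Module.finrank ℝ (EuclideanSpace ℝ m) =
      Fintype.card (k ⊕ Fin (Fintype.card m - Fintype.card k)) := by
    simp only [finrank_euclideanSpace, Fintype.card_sum, Fintype.card_fin]; omega
  have hf : Pairwise fun a b => inner ℝ (f a) (f b) = 0 := by
    rintro (i | i) (j | j) hij
    · simpa [f, EuclideanSpace.inner_toLp_toLp, mul_apply, dotProduct, mul_comm] using
        hC (Sum.inl_injective.ne_iff.1 hij).symm
    all_goals simp [f]
  obtain ⟨b, hb⟩ := exists_orthonormalBasis_smul_eq_of_pairwise_inner_eq_zero hcard hf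
  refine ⟨of fun i j => b (Sum.inl j) i, fun j => ‖f (Sum.inl j)‖, ?_, fun j => norm_nonneg _, ?_⟩
  · ext j j'
    have := orthonormal_iff_ite.1 (b.orthonormal.comp _ Sum.inl_injective) j j'
    simpa [EuclideanSpace.inner_eq_star_dotProduct, mul_apply, one_apply, dotProduct,
      mul_comm] using this
  · ext i j
    simpa [f, mul_comm] using congrArg (· i) (hb (Sum.inl j))

theorem exists_svd_of_card_le [Fintype m] (hk : Fintype.card k ≤ Fintype.card m)
    (B : Matrix m k ℝ) :
    ∃ (U : Matrix m k ℝ) (V : Matrix k k ℝ) (σ : k → ℝ),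
      Uᵀ * U = 1 ∧ Vᵀ * V = 1 ∧ 0 ≤ σ ∧ B = U * diagonal σ * Vᵀ := by
  have hA : (Bᵀ * B).IsHermitian := by
    simpa using isHermitian_conjTranspose_mul_self B
  set V : Matrix k k ℝ := (hA.eigenvectorUnitary : Matrix k k ℝ)
  have hV : Vᵀ * V = 1 := by
    simpa only [star_eq_conjTranspose, conjTranspose_eq_transpose_of_trivial] using
      Unitary.coe_star_mul_self hA.eigenvectorUnitary
  have hdiag : (B * V)ᵀ * (B * V) = diagonal hA.eigenvalues := by
    simpa [V, Matrix.mul_assoc, Function.comp_def, star_eq_conjTranspose] using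
      hA.conjStarAlgAut_star_eigenvectorUnitary
  obtain ⟨U, σ, hU, hσ, hBV⟩ := exists_orthonormal_mul_diagonal_eq_of_orthogonal_columns hk
    (B * V) fun i j hij => (congrFun₂ hdiag i j).trans (diagonal_apply_ne _ hij)
  refine ⟨U, V, σ, hU, hV, hσ, ?_⟩
  rw [← hBV, Matrix.mul_assoc, mul_eq_one_comm.1 hV, Matrix.mul_one]

theorem range_mulVecLin_mul_of_isUnit {R : Type*} [CommRing R] (A : Matrix m k R)
    {P : Matrix k k R} (hP : IsUnit P) :
    LinearMap.range (A * P).mulVecLin = LinearMap.range A.mulVecLin := by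
  rw [mulVecLin_mul]
  exact LinearMap.range_comp_of_range_eq_top _
    (LinearMap.range_eq_top.2 (mulVec_surjective_iff_isUnit.2 hP))

theorem mul_inv_sub_transpose_mul_eq_zero {R : Type*} [CommRing R] [Fintype m]
    {Y Y' : Matrix m k R} (hY : Yᵀ * Y = 1) (hM : IsUnit (Yᵀ * Y')) :
    (Y' * (Yᵀ * Y')⁻¹ - Y)ᵀ * Y = 0 := by
  have hM' : Y'ᵀ * Y = (Yᵀ * Y')ᵀ := by rw [transpose_mul, transpose_transpose]
  rw [transpose_sub, Matrix.sub_mul, hY, transpose_mul, Matrix.mul_assoc, hM', ← transpose_mul,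
    mul_nonsing_inv _ ((isUnit_iff_isUnit_det _).1 hM), transpose_one, sub_self]

theorem mul_diagonal_mul_transpose_eq_mul {K : Type*} [Field K] {U : Matrix m k K}
    {V : Matrix k k K} {σ θ : k → K} (hV : Vᵀ * V = 1) (hθ : ∀ i, σ i = 0 → θ i = 0) :
    U * diagonal θ * Vᵀ = U * diagonal σ * Vᵀ * (V * diagonal (θ / σ) * Vᵀ) := by
  have hθσ : diagonal θ = diagonal σ * diagonal (θ / σ) := by
    rw [diagonal_mul_diagonal]
    congr 1; funext i
    by_cases hi : σ i = 0
    · simp [hi, hθ i hi]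
    · simp [mul_div_cancel₀ _ hi]
  simp only [hθσ, Matrix.mul_assoc, ← Matrix.mul_assoc Vᵀ V, hV, Matrix.one_mul]

theorem mul_mul_diagonal_add_mul_diagonal {R : Type*} [CommRing R] [Fintype m]
    {Y U : Matrix m k R} {V : Matrix k k R} {σ c s : k → R} (hV : Vᵀ * V = 1)
    (hs : ∀ i, s i = σ i * c i) :
    Y * V * diagonal c + U * diagonal s = (Y + U * diagonal σ * Vᵀ) * V * diagonal c := by
  rw [funext hs, ← diagonal_mul_diagonal, Matrix.add_mul, Matrix.add_mul,
    Matrix.mul_assoc (U * diagonal σ) Vᵀ V, hV, Matrix.mul_one, Matrix.mul_assoc U]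

end Matrix

theorem Real.sin_arctan_eq_mul_cos_arctan (x : ℝ) :
    Real.sin (Real.arctan x) = x * Real.cos (Real.arctan x) := by
  rw [Real.sin_arctan, Real.cos_arctan, mul_one_div]

theorem log_domain_in_exp_image_general
    (n p : ℕ) (hpn : p ≤ n)
    (Y Y' : Matrix (Fin n) (Fin p) ℝ)
    (hY : Yᵀ * Y = 1)
    (hinv : IsUnit (Yᵀ * Y')) :
    ∃ (Z U : Matrix (Fin n) (Fin p) ℝ) (V : Matrix (Fin p) (Fin p) ℝ)
      (θ : Fin p → ℝ),
      Zᵀ * Y = 0 ∧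
      Uᵀ * U = 1 ∧ Vᵀ * V = 1 ∧
      (∀ i, 0 ≤ θ i) ∧ (∀ i, θ i < Real.pi / 2) ∧
      Z = U * Matrix.diagonal θ * Vᵀ ∧
      LinearMap.range
          (Y * V * Matrix.diagonal (fun i => Real.cos (θ i)) +
            U * Matrix.diagonal (fun i => Real.sin (θ i))).mulVecLin =
        LinearMap.range Y'.mulVecLin := by
  set B := Y' * (Yᵀ * Y')⁻¹ - Y
  obtain ⟨U, V, σ, hU, hV, hσ, hB⟩ := exists_svd_of_card_le (by simpa using hpn) B
  set θ := fun i => Real.arctan (σ i)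
  have hcos : IsUnit (diagonal fun i => Real.cos (θ i)) :=
    isUnit_diagonal.2 (Pi.isUnit_iff.2 fun i => (Real.cos_arctan_pos _).ne'.isUnit)
  refine ⟨U * diagonal θ * Vᵀ, U, V, θ, ?horizontal, hU, hV, fun i => Real.arctan_nonneg.2 (hσ i),
    fun i => Real.arctan_lt_pi_div_two _, rfl, ?range⟩
  case horizontal =>
    rw [mul_diagonal_mul_transpose_eq_mul hV (σ := σ) fun i hi => by simp [θ, hi], ← hB,
      transpose_mul, Matrix.mul_assoc, mul_inv_sub_transpose_mul_eq_zero hY hinv, Matrix.mul_zero]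
  case range =>
    rw [mul_mul_diagonal_add_mul_diagonal hV (σ := σ)
        fun i => Real.sin_arctan_eq_mul_cos_arctan _,
      ← hB, add_sub_cancel, Matrix.mul_assoc, Matrix.mul_assoc, range_mulVecLin_mul_of_isUnit]
    exact (isUnit_nonsing_inv_iff.2 hinv).mul ((IsUnit.of_mul_eq_one_right _ hV).mul hcos)

/-- matrix form of the inclusion `U_ω ⊆ Exp_ω(V_ω)`.
Let `Y, Y' ∈ ℝ^{n×p}` have orthonormal columns with `YᵀY'` invertible. Then
there exist a horizontal matrix `Z` (`ZᵀY = 0`) all of whose singular values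
are strictly less than `π/2`, and a thin SVD `Z = UΘVᵀ`, such that the column
space of `Y V cos Θ + U sin Θ` equals the column space of `Y'`. -/
theorem log_domain_in_exp_image
    (n p : ℕ) (hp : 0 < p) (hpn : p ≤ n)
    (Y Y' : Matrix (Fin n) (Fin p) ℝ)
    (hY : Yᵀ * Y = 1) (hY' : Y'ᵀ * Y' = 1)
    (hinv : IsUnit (Yᵀ * Y')) :
    ∃ (Z U : Matrix (Fin n) (Fin p) ℝ) (V : Matrix (Fin p) (Fin p) ℝ)
      (θ : Fin p → ℝ),
      Zᵀ * Y = 0 ∧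
      Uᵀ * U = 1 ∧ Vᵀ * V = 1 ∧
      (∀ i, 0 ≤ θ i) ∧ (∀ i, θ i < Real.pi / 2) ∧
      Z = U * Matrix.diagonal θ * Vᵀ ∧
      LinearMap.range
          (Y * V * Matrix.diagonal (fun i => Real.cos (θ i)) +
            U * Matrix.diagonal (fun i => Real.sin (θ i))).mulVecLin =
        LinearMap.range Y'.mulVecLin :=
  log_domain_in_exp_image_general n p hpn Y Y' hY hinv
end
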